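/- Under Assumption 1, define z_t = P_β y_t + P_{β⊥} Δy_t. If {y_t} satisfies the time-varying VECM, then z_t satisfies the time-varying VAR(p) recursion z_t = Σ_{i=1}^{p} B_i(τ_t) z_{t−i} + u_t, and y_t admits the exact representation y_t = P_{β⊥} Σ_{j=1}^{t} z_j + P_β z_t + P_{β⊥} y_0 for every t ≥ 1. -/

import Mathlib

open MeasureTheory ProbabilityTheory Filter Matrix Set
open scoped BigOperators ENNReal NNReal Kronecker Topology

noncomputable section

/-! ### Generic auxiliary notions -/

/-- The four Moore–Penrose equations. -/
def IsMPInv {m n : Type*} [Fintype m] [Fintype n]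
    (A : Matrix m n ℝ) (B : Matrix n m ℝ) : Prop :=
  A * B * A = A ∧ B * A * B = B ∧ (A * B)ᵀ = A * B ∧ (B * A)ᵀ = B * A

open Classical in
/-- Moore–Penrose pseudoinverse (via choice; it exists and is unique for real matrices). -/
def mpinv {m n : Type*} [Fintype m] [Fintype n] (A : Matrix m n ℝ) : Matrix n m ℝ :=
  if h : ∃ B, IsMPInv A B then h.choose else 0

/-- Spectral (ℓ²-operator) norm of a real matrix. -/
def specNorm {m n : Type*} [Fintype m] [Fintype n] [DecidableEq n] (A : Matrix m n ℝ) : ℝ :=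
  ‖LinearMap.toContinuousLinearMap (Matrix.toEuclideanLin A)‖

open Classical in
/-- A square root of a positive semidefinite matrix (via choice). -/
def msqrt {q : Type*} [Fintype q] (A : Matrix q q ℝ) : Matrix q q ℝ :=
  if h : ∃ B : Matrix q q ℝ, B.PosSemidef ∧ B * B = A then h.choose else 0

/-- Convergence in distribution, via bounded continuous test functions. -/
def ConvDist {W : Type*} [MeasurableSpace W] (P : Measure W) {E : Type*}
    [MeasurableSpace E] [TopologicalSpace E] (X : ℕ → W → E) (μ : Measure E) : Prop :=
  ∀ f : BoundedContinuousFunction E ℝ,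
    Tendsto (fun T => ∫ w, f (X T w) ∂P) atTop (𝓝 (∫ x, f x ∂μ))

/-- A centered Gaussian law on `ι → ℝ` with covariance matrix `S`. -/
def IsCenteredGaussian {ι : Type*} [Fintype ι] (μ : Measure (ι → ℝ)) (S : Matrix ι ι ℝ) : Prop :=
  IsProbabilityMeasure μ ∧
    ∀ a : ι → ℝ, Measure.map (fun x => ∑ i, a i * x i) μ =
      gaussianReal 0 (Real.toNNReal (a ⬝ᵥ S.mulVec a))

/-- A mean-zero Gaussian process with independent increments on `[0,1]` whose covariance
matrix at time `v` is `Cf v`. -/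
def IsGaussianProcess {W : Type*} [MeasurableSpace W] (P : Measure W) {n : ℕ}
    (G : ℝ → W → Fin n → ℝ) (Cf : ℝ → Matrix (Fin n) (Fin n) ℝ) : Prop :=
  (∀ v, Measurable (G v)) ∧
  (∀ a : Fin n → ℝ, Measure.map (fun w => ∑ i, a i * G 0 w i) P = gaussianReal 0 0) ∧
  (∀ v ∈ Icc (0:ℝ) 1, ∀ v' ∈ Icc (0:ℝ) 1, v ≤ v' → ∀ a : Fin n → ℝ,
    Measure.map (fun w => ∑ i, a i * (G v' w i - G v w i)) P =
      gaussianReal 0 (Real.toNNReal (a ⬝ᵥ (Cf v' - Cf v).mulVec a))) ∧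
  (∀ (k : ℕ) (us : Fin (k + 1) → ℝ), Monotone us → (∀ i, us i ∈ Icc (0:ℝ) 1) →
    iIndepFun
      (fun i : Fin k => fun w q => G (us i.succ) w q - G (us i.castSucc) w q) P)

/-- Complexification of a real matrix. -/
def toC {m n : Type*} (A : Matrix m n ℝ) : Matrix m n ℂ := A.map fun x => (x : ℂ)

/-- Rescaled time `τ_t = t/T`. -/
def τt (T : ℕ) (t : ℤ) : ℝ := (t : ℝ) / (T : ℝ)

/-! ### Kernel constants -/

def ck (K : ℝ → ℝ) (k : ℕ) : ℝ := ∫ v in (-1:ℝ)..1, v ^ k * K v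
def vk (K : ℝ → ℝ) (k : ℕ) : ℝ := ∫ v in (-1:ℝ)..1, v ^ k * (K v) ^ 2
def CB (K : ℝ → ℝ) : ℝ := ∫ v in (0:ℝ)..2, (∫ r in (-1:ℝ)..(1 - v), K r * K (r + v)) ^ 2

/-! ### The time-varying VECM data -/

structure TVData where
  d : ℕ
  r0 : ℕ
  p0 : ℕ
  hd : 0 < d
  hr0d : r0 ≤ d
  hp0 : 1 ≤ p0
  Ω : Type
  mΩ : MeasurableSpace Ω
  P : @Measure Ω mΩ
  ε : ℤ → Ω → Fin d → ℝ
  α : ℝ → Matrix (Fin d) (Fin r0) ℝ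
  β : Matrix (Fin d) (Fin r0) ℝ
  Γ : ℕ → ℝ → Matrix (Fin d) (Fin d) ℝ
  ω : ℝ → Matrix (Fin d) (Fin d) ℝ
  αperp : ℝ → Matrix (Fin d) (Fin (d - r0)) ℝ
  βperp : Matrix (Fin d) (Fin (d - r0)) ℝ
  y : ℕ → ℤ → Ω → Fin d → ℝ
  δ : ℝ
  hδ : 4 < δ

attribute [instance] TVData.mΩ

namespace TVData

variable (M : TVData)

def Δy (T : ℕ) (t : ℤ) (w : M.Ω) : Fin M.d → ℝ :=
  fun i => M.y T t w i - M.y T (t - 1) w i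

def Pi' (s : ℝ) : Matrix (Fin M.d) (Fin M.d) ℝ := M.α s * (M.β)ᵀ

def u (T : ℕ) (t : ℤ) (w : M.Ω) : Fin M.d → ℝ := (M.ω (τt T t)).mulVec (M.ε t w)

/-- The time-varying VECM equation for sample size `T`. -/
def VECMeqAt (T : ℕ) : Prop :=
  ∀ t : ℤ, t ≤ (T : ℤ) → ∀ w : M.Ω,
    M.Δy T t w =
      (M.Pi' (τt T t)).mulVec (M.y T (t - 1) w) +
      (∑ j ∈ Finset.range (M.p0 - 1),
        (M.Γ j (τt T t)).mulVec (M.Δy T (t - 1 - (j : ℤ)) w)) +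
      M.u T t w

def VECMeq : Prop := ∀ T : ℕ, 1 ≤ T → M.VECMeqAt T

/-- `Γ_τ(1) = I - ∑ Γ_j(τ)`. -/
def ΓL1 (s : ℝ) : Matrix (Fin M.d) (Fin M.d) ℝ :=
  1 - ∑ j ∈ Finset.range (M.p0 - 1), M.Γ j s

/-- `Ω(τ) = ω(τ)ω(τ)ᵀ`. -/
def Ωm (s : ℝ) : Matrix (Fin M.d) (Fin M.d) ℝ := M.ω s * (M.ω s)ᵀ

def Pbeta : Matrix (Fin M.d) (Fin M.d) ℝ := M.β * ((M.β)ᵀ * M.β)⁻¹ * (M.β)ᵀ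
def Pbetaperp : Matrix (Fin M.d) (Fin M.d) ℝ :=
  M.βperp * ((M.βperp)ᵀ * M.βperp)⁻¹ * (M.βperp)ᵀ

/-- Natural filtration of the innovations. -/
def F (t : ℤ) : MeasurableSpace M.Ω :=
  ⨆ s : {s : ℤ // s ≤ t}, MeasurableSpace.comap (M.ε s) inferInstance

/-- Martingale-difference structure with conditionally standardized innovations. -/
def MDS : Prop :=
  (∀ t : ℤ, ∀ i, condExp (M.F (t - 1)) M.P (fun w => M.ε t w i) =ᵐ[M.P] fun _ => 0) ∧
  (∀ t : ℤ, ∀ i j, condExp (M.F (t - 1)) M.P (fun w => M.ε t w i * M.ε t w j)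
      =ᵐ[M.P] fun _ => if i = j then (1:ℝ) else 0)

open Polynomial in
/-- The matrix polynomial `C_τ(L)` (over `ℂ`). -/
def Cpoly (s : ℝ) : Matrix (Fin M.d) (Fin M.d) (Polynomial ℂ) :=
  ((1 - X : Polynomial ℂ)) • (1 : Matrix (Fin M.d) (Fin M.d) (Polynomial ℂ)) -
    (X : Polynomial ℂ) • ((M.Pi' s).map fun x => Polynomial.C (x : ℂ)) -
    ∑ j ∈ Finset.range (M.p0 - 1),
      (((1 - X) * X ^ (j + 1) : Polynomial ℂ)) • ((M.Γ j s).map fun x => Polynomial.C (x : ℂ))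

def βbar : Matrix (Fin M.d) (Fin M.r0) ℝ := M.β * ((M.β)ᵀ * M.β)⁻¹
def βperpbar : Matrix (Fin M.d) (Fin (M.d - M.r0)) ℝ :=
  M.βperp * ((M.βperp)ᵀ * M.βperp)⁻¹

/-- `Γ_τ(z) = I - ∑ Γ_j(τ) z^j` evaluated at a complex point. -/
def Γz (s : ℝ) (z : ℂ) : Matrix (Fin M.d) (Fin M.d) ℂ :=
  1 - ∑ j ∈ Finset.range (M.p0 - 1), z ^ (j + 1) • toC (M.Γ j s)

/-- `J = [β, β̄⊥]ᵀ`. -/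
def Jmat : Matrix (Fin M.r0 ⊕ Fin (M.d - M.r0)) (Fin M.d) ℝ :=
  (Matrix.fromCols M.β M.βperpbar)ᵀ

/-- The operator `B_τ(z) = J⁻¹ B*_τ(z) J = [Γ_τ(z)β̄(1-z) - α(τ)z, Γ_τ(z)β⊥] ⬝ J`. -/
def Bz (s : ℝ) (z : ℂ) : Matrix (Fin M.d) (Fin M.d) ℂ :=
  (Matrix.fromCols ((1 - z) • (M.Γz s z * toC M.βbar) - z • toC (M.α s))
      (M.Γz s z * toC M.βperp)) * toC M.Jmat

/-- `Ψ` is the family of coefficients of the power-series inverse `Ψ_τ(L) = B_τ(L)⁻¹`,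
well-defined on the closed unit disc. -/
def InvSeries (Ψ : ℕ → ℝ → Matrix (Fin M.d) (Fin M.d) ℝ) : Prop :=
  ∀ s ∈ Icc (0:ℝ) 1, ∀ z : ℂ, ‖z‖ ≤ 1 →
    (∀ i k, Summable fun j : ℕ => ((Ψ j s i k : ℝ) : ℂ) * z ^ j) ∧
    M.Bz s z * (Matrix.of fun i k => ∑' j : ℕ, ((Ψ j s i k : ℝ) : ℂ) * z ^ j) = 1

/-- The long-run matrix `Ψ_τ(1) = ∑_j Ψ_j(τ)`. -/
def Ψ1 (Ψ : ℕ → ℝ → Matrix (Fin M.d) (Fin M.d) ℝ) (s : ℝ) :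
    Matrix (Fin M.d) (Fin M.d) ℝ :=
  Matrix.of fun i k => ∑' j : ℕ, Ψ j s i k

/-- `Σ_y(u) = P_{β⊥} ∫_0^u Ψ_s(1) Ω(s) Ψ_s(1)ᵀ ds P_{β⊥}`. -/
def Sigy (Ψ : ℕ → ℝ → Matrix (Fin M.d) (Fin M.d) ℝ) (v : ℝ) :
    Matrix (Fin M.d) (Fin M.d) ℝ :=
  M.Pbetaperp *
    (Matrix.of fun i k => ∫ s in (0:ℝ)..v, (M.Ψ1 Ψ s * M.Ωm s * (M.Ψ1 Ψ s)ᵀ) i k) *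
    M.Pbetaperp

/-- The time-varying VMA(∞) process `z̃_t(τ) = ∑_j Ψ_j(τ) ω(τ) ε_{t-j}`. -/
def ztil (Ψ : ℕ → ℝ → Matrix (Fin M.d) (Fin M.d) ℝ) (s : ℝ) (t : ℤ) (w : M.Ω) :
    Fin M.d → ℝ :=
  fun i => ∑' j : ℕ, ((Ψ j s * M.ω s).mulVec (M.ε (t - (j : ℤ)) w)) i

abbrev wIdx : Type := Fin M.r0 ⊕ (Fin (M.p0 - 1) × Fin M.d)

/-- Frozen-coefficient stationary regressor `w̃_t(τ) = [ỹ_t(τ)ᵀβ, Δx̃_t(τ)ᵀ]ᵀ`. -/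
def wtil (Ψ : ℕ → ℝ → Matrix (Fin M.d) (Fin M.d) ℝ) (s : ℝ) (t : ℤ) (w : M.Ω) :
    M.wIdx → ℝ :=
  fun a => match a with
  | Sum.inl q => ((M.β)ᵀ.mulVec (M.ztil Ψ s t w)) q
  | Sum.inr (j, i) =>
      M.ztil Ψ s (t - (j : ℤ)) w i - (M.Pbeta.mulVec (M.ztil Ψ s (t - (j : ℤ) - 1) w)) i

/-- `Σ_w(τ) = E(w̃_t(τ) w̃_t(τ)ᵀ)`. -/
def Sigw (Ψ : ℕ → ℝ → Matrix (Fin M.d) (Fin M.d) ℝ) (s : ℝ) : Matrix M.wIdx M.wIdx ℝ :=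
  Matrix.of fun a b => ∫ w, M.wtil Ψ s 0 w a * M.wtil Ψ s 0 w b ∂M.P

end TVData

/-! ### Assumption 1 -/

structure Assumption1 (M : TVData) : Prop where
  probMeas : IsProbabilityMeasure M.P
  εmeas : ∀ t, Measurable (M.ε t)
  ymeas : ∀ T t, Measurable (M.y T t)
  model : M.VECMeq
  roots : ∀ s ∈ Icc (0:ℝ) 1, ∀ z : ℂ,
    (M.Cpoly s).det.eval z = 0 → 1 < ‖z‖ ∨ z = 1
  unitRoots : ∀ s ∈ Icc (0:ℝ) 1,
    Polynomial.rootMultiplicity 1 (M.Cpoly s).det = M.d - M.r0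
  rankα : ∀ s ∈ Icc (0:ℝ) 1, (M.α s).rank = M.r0
  rankβ : M.β.rank = M.r0
  perpα : ∀ s ∈ Icc (0:ℝ) 1, (M.α s)ᵀ * M.αperp s = 0 ∧ (M.αperp s).rank = M.d - M.r0
  perpβ : (M.β)ᵀ * M.βperp = 0 ∧ M.βperp.rank = M.d - M.r0
  nonsing : ∀ s ∈ Icc (0:ℝ) 1, ((M.αperp s)ᵀ * M.ΓL1 s * M.βperp).det ≠ 0
  smoothα : ∀ i j, ContDiffOn ℝ 3 (fun s => M.α s i j) (Icc 0 1)
  smoothΓ : ∀ k i j, ContDiffOn ℝ 3 (fun s => M.Γ k s i j) (Icc 0 1)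
  smoothω : ∀ i j, ContDiffOn ℝ 3 (fun s => M.ω s i j) (Icc 0 1)
  freezeα : ∀ s < (0:ℝ), M.α s = M.α 0
  freezeΓ : ∀ s < (0:ℝ), ∀ k, M.Γ k s = M.Γ k 0
  freezeω : ∀ s < (0:ℝ), M.ω s = M.ω 0
  y0bdd : ∀ e : ℝ, 0 < e → ∃ Mb : ℝ, ∀ T : ℕ, 1 ≤ T →
    M.P {w | Mb < ‖M.y T 0 w‖} ≤ ENNReal.ofReal e
  mds : M.MDS
  moments : ∃ C : ℝ, ∀ t : ℤ, (∫ w, ‖M.ε t w‖ ^ M.δ ∂M.P) ≤ C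
  Ωpos : ∀ s ∈ Icc (0:ℝ) 1, (M.Ωm s).PosDef

/-! ### Assumption 2 -/

structure KernelBW (K : ℝ → ℝ) (h : ℕ → ℝ) : Prop where
  symm : ∀ v : ℝ, K (-v) = K v
  pos : ∀ v ∈ Icc (-1:ℝ) 1, 0 < K v
  nonneg : ∀ v : ℝ, 0 ≤ K v
  supp : ∀ v : ℝ, 1 < |v| → K v = 0
  int_one : ∫ v in (-1:ℝ)..1, K v = 1
  lip : ∃ L : ℝ≥0, LipschitzOnWith L K (Icc (-1:ℝ) 1)
  hpos : ∀ T, 0 < h T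
  h0 : Tendsto h atTop (𝓝 0)
  Th : Tendsto (fun T : ℕ => (T : ℝ) * h T) atTop atTop

structure Assumption2 (M : TVData) (K : ℝ → ℝ) (h : ℕ → ℝ) : Prop where
  kern : KernelBW K h
  indep : iIndepFun M.ε M.P
  rate : Tendsto (fun T : ℕ =>
    (T : ℝ) ^ (1 - 4 / M.δ) * h T / (Real.log T) ^ (1 - 4 / M.δ)) atTop atTop

/-! ### Local linear estimation machinery -/

def kwt (K : ℝ → ℝ) (h : ℕ → ℝ) (T : ℕ) (t : ℤ) (s : ℝ) (l : ℕ) : ℝ :=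
  (((t : ℝ) / (T : ℝ) - s) / h T) ^ l * K (((t : ℝ) / (T : ℝ) - s) / h T)

section LL

variable {W : Type*} {idx : Type*} [Fintype idx] [DecidableEq idx] {d : ℕ}

def llS (K : ℝ → ℝ) (h : ℕ → ℝ) (g : ℤ → W → idx → ℝ) (l T : ℕ) (s : ℝ) (w : W) :
    Matrix idx idx ℝ :=
  ∑ t ∈ Finset.Icc (1:ℤ) (T:ℤ), kwt K h T t s l • Matrix.of fun a b => g t w a * g t w b

def llV (K : ℝ → ℝ) (h : ℕ → ℝ) (Yr : ℤ → W → Fin d → ℝ) (g : ℤ → W → idx → ℝ)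
    (l T : ℕ) (s : ℝ) (w : W) : Matrix (Fin d) idx ℝ :=
  ∑ t ∈ Finset.Icc (1:ℤ) (T:ℤ), kwt K h T t s l • Matrix.of fun i a => Yr t w i * g t w a

/-- Local linear estimator `[V₀, V₁] ⬝ (S-block)⁺ ⬝ [I; 0]`. -/
def llEst (K : ℝ → ℝ) (h : ℕ → ℝ) (Yr : ℤ → W → Fin d → ℝ) (g : ℤ → W → idx → ℝ)
    (T : ℕ) (s : ℝ) (w : W) : Matrix (Fin d) idx ℝ :=
  Matrix.fromCols (llV K h Yr g 0 T s w) (llV K h Yr g 1 T s w) *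
    mpinv (Matrix.fromBlocks (llS K h g 0 T s w) (llS K h g 1 T s w)
      (llS K h g 1 T s w) (llS K h g 2 T s w)) *
    Matrix.fromRows (1 : Matrix idx idx ℝ) (0 : Matrix idx idx ℝ)

def llResid (K : ℝ → ℝ) (h : ℕ → ℝ) (Yr : ℤ → W → Fin d → ℝ) (g : ℤ → W → idx → ℝ)
    (T : ℕ) (t : ℤ) (w : W) : Fin d → ℝ :=
  fun i => Yr t w i - ((llEst K h Yr g T ((t : ℝ) / (T : ℝ)) w).mulVec (g t w)) i

def Pstat (K : ℝ → ℝ) (h : ℕ → ℝ) (T : ℕ) (l : ℕ) (s : ℝ) : ℝ :=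
  (1 / ((T : ℝ) * h T)) * ∑ t ∈ Finset.Icc (1:ℤ) (T:ℤ), kwt K h T t s l

/-- Local linear weights `w_t(τ)`. -/
def llw (K : ℝ → ℝ) (h : ℕ → ℝ) (T : ℕ) (t : ℤ) (s : ℝ) : ℝ :=
  (1 / h T) * K (((t : ℝ) / (T : ℝ) - s) / h T) *
    (Pstat K h T 2 s - (((t : ℝ) / (T : ℝ) - s) / h T) * Pstat K h T 1 s) /
    (Pstat K h T 0 s * Pstat K h T 2 s - (Pstat K h T 1 s) ^ 2)

/-- Local linear residual covariance estimator. -/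
def llOm (K : ℝ → ℝ) (h : ℕ → ℝ) (Yr : ℤ → W → Fin d → ℝ) (g : ℤ → W → idx → ℝ)
    (T : ℕ) (s : ℝ) (w : W) : Matrix (Fin d) (Fin d) ℝ :=
  (1 / (T : ℝ)) •
    ∑ t ∈ Finset.Icc (1:ℤ) (T:ℤ),
      llw K h T t s •
        Matrix.of fun i j => llResid K h Yr g T t w i * llResid K h Yr g T t w j

end LL

namespace TVData

variable (M : TVData)

/-- The VECM regressor `h_{t-1} = [y_{t-1}ᵀ, Δx_{t-1}ᵀ]ᵀ`, with `p-1` lagged differences. -/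
def hreg (p T : ℕ) (t : ℤ) (w : M.Ω) : (Fin M.d ⊕ (Fin (p - 1) × Fin M.d)) → ℝ :=
  fun a => match a with
  | Sum.inl i => M.y T (t - 1) w i
  | Sum.inr (j, i) => M.Δy T (t - 1 - (j : ℤ)) w i

/-- Local linear estimator `[Π̂(τ), Γ̂(τ)]` with `p-1` lagged differences. -/
def Est (K : ℝ → ℝ) (h : ℕ → ℝ) (p T : ℕ) (s : ℝ) (w : M.Ω) :
    Matrix (Fin M.d) (Fin M.d ⊕ (Fin (p - 1) × Fin M.d)) ℝ :=
  llEst K h (M.Δy T) (M.hreg p T) T s w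

/-- True coefficient matrix `[Π(τ), Γ(τ)]`. -/
def Coef (s : ℝ) : Matrix (Fin M.d) (Fin M.d ⊕ (Fin (M.p0 - 1) × Fin M.d)) ℝ :=
  Matrix.of fun i a => match a with
  | Sum.inl k => M.Pi' s i k
  | Sum.inr (j, k) => M.Γ j s i k

/-- Local linear residuals with `p-1` lagged differences. -/
def uhat (K : ℝ → ℝ) (h : ℕ → ℝ) (p T : ℕ) (t : ℤ) (w : M.Ω) : Fin M.d → ℝ :=
  llResid K h (M.Δy T) (M.hreg p T) T t w

/-- Residual covariance estimator `Ω̂(τ)`. -/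
def Ωhat (K : ℝ → ℝ) (h : ℕ → ℝ) (T : ℕ) (s : ℝ) (w : M.Ω) :
    Matrix (Fin M.d) (Fin M.d) ℝ :=
  llOm K h (M.Δy T) (M.hreg M.p0 T) T s w

/-- `Π̂(τ)`. -/
def PiHat (K : ℝ → ℝ) (h : ℕ → ℝ) (T : ℕ) (s : ℝ) (w : M.Ω) :
    Matrix (Fin M.d) (Fin M.d) ℝ :=
  Matrix.of fun i k => M.Est K h M.p0 T s w i (Sum.inl k)

/-- `α̂(τ)`: the first `r0` columns of `Π̂(τ)`. -/
def αhat (K : ℝ → ℝ) (h : ℕ → ℝ) (T : ℕ) (s : ℝ) (w : M.Ω) :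
    Matrix (Fin M.d) (Fin M.r0) ℝ :=
  Matrix.of fun i q => M.Est K h M.p0 T s w i (Sum.inl (Fin.castLE M.hr0d q))

/-- True `[α(τ), Γ(τ)]`. -/
def abTrue (s : ℝ) : Matrix (Fin M.d) M.wIdx ℝ :=
  Matrix.of fun i a => match a with
  | Sum.inl q => M.α s i q
  | Sum.inr (j, k) => M.Γ j s i k

/-- Estimated `[α̂(τ), Γ̂(τ)]`. -/
def abHat (K : ℝ → ℝ) (h : ℕ → ℝ) (T : ℕ) (s : ℝ) (w : M.Ω) :
    Matrix (Fin M.d) M.wIdx ℝ :=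
  Matrix.of fun i a => match a with
  | Sum.inl q => M.αhat K h T s w i q
  | Sum.inr x => M.Est K h M.p0 T s w i (Sum.inr x)

/-- `b(τ) = vec(α(τ), Γ(τ))`. -/
def bvec (s : ℝ) : (M.wIdx × Fin M.d) → ℝ := fun p => M.abTrue s p.2 p.1

/-- `b̂(τ) = vec(α̂(τ), Γ̂(τ))`. -/
def bhat (K : ℝ → ℝ) (h : ℕ → ℝ) (T : ℕ) (s : ℝ) (w : M.Ω) : (M.wIdx × Fin M.d) → ℝ :=
  fun p => M.abHat K h T s w p.2 p.1

/-- The in-sample regressor `w_t = [z_tᵀ β, Δx_tᵀ]ᵀ` (note `βᵀz_t = βᵀ y_t`). -/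
def wv (T : ℕ) (t : ℤ) (w : M.Ω) : M.wIdx → ℝ :=
  fun a => match a with
  | Sum.inl q => ((M.β)ᵀ.mulVec (M.y T t w)) q
  | Sum.inr (j, i) => M.Δy T (t - (j : ℤ)) w i

/-- Kernel estimator `Σ̂_w(τ)`. -/
def Sigwhat (K : ℝ → ℝ) (h : ℕ → ℝ) (T : ℕ) (s : ℝ) (w : M.Ω) : Matrix M.wIdx M.wIdx ℝ :=
  (((T : ℝ) * h T)⁻¹) • llS K h (fun t w' => M.wv T (t - 1) w') 0 T s w

/-- The index of the last `d - r0` coordinates. -/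
def lastIdx (m : Fin (M.d - M.r0)) : Fin M.d :=
  ⟨M.r0 + (m : ℕ), by have h1 := m.2; have h2 := M.hr0d; omega⟩

end TVData

/-! ### Statement 1 : the transformed process `z_t` and the exact representation of `y_t` -/

/-- `z_t = P_β y_t + P_{β⊥} Δy_t`. -/
def zproc (M : TVData) (T : ℕ) (t : ℤ) (w : M.Ω) : Fin M.d → ℝ :=
  fun i => (M.Pbeta.mulVec (M.y T t w)) i + (M.Pbetaperp.mulVec (M.Δy T t w)) i


/-!
With `P = P_β` and `Q = P_{β⊥}` complementary projections (`P + Q = 1`, because `βᵀβ⊥ = 0` and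
`[β, β⊥]` is square of full rank), `z_t = P y_t + Q Δy_t` is just `y_t - Q y_{t-1}`.
Then `P z_t = P y_t` and `Q z_t = Q y_t - Q y_{t-1}` telescopes, which gives the representation of
`y_t`. Moreover `Δy_t = z_t - P z_{t-1}` and `Π y_{t-1} = Π z_{t-1}` (as `Π Q = 0`), so substituting
into the VECM and collecting lags gives the VAR; its lag polynomial is
`I - (P + Π) L - ∑ Γ_j L^j (1 - P L)`, which is `J⁻¹ B*_τ(L) J` computed blockwise.
-/

namespace Matrix

variable {K : Type*} [Field K] {n m : Type*} [Fintype n] [Fintype m] [DecidableEq m]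

def colSpaceProj (A : Matrix n m K) : Matrix n n K := A * (Aᵀ * A)⁻¹ * Aᵀ

theorem isUnit_det_of_rank_eq_card {A : Matrix m m K} (h : A.rank = Fintype.card m) :
    IsUnit A.det := by
  have hrange : LinearMap.range A.mulVecLin = ⊤ :=
    Submodule.eq_top_of_finrank_eq (by rw [← rank, h, Module.finrank_pi])
  rw [← isUnit_iff_isUnit_det, ← mulVec_surjective_iff_isUnit]
  exact LinearMap.range_eq_top.mp hrange

theorem isUnit_det_transpose_mul_self {A : Matrix n m ℝ} (h : A.rank = Fintype.card m) :
    IsUnit (Aᵀ * A).det :=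
  isUnit_det_of_rank_eq_card (by rw [rank_transpose_mul_self, h])

variable {A : Matrix n m K}

theorem colSpaceProj_mul_self (hA : IsUnit (Aᵀ * A).det) : colSpaceProj A * A = A := by
  rw [colSpaceProj, Matrix.mul_assoc, Matrix.mul_assoc, nonsing_inv_mul _ hA, Matrix.mul_one]

theorem isIdempotentElem_colSpaceProj (hA : IsUnit (Aᵀ * A).det) :
    IsIdempotentElem (colSpaceProj A) := by
  rw [IsIdempotentElem]
  nth_rewrite 2 [colSpaceProj]
  rw [← Matrix.mul_assoc, ← Matrix.mul_assoc, colSpaceProj_mul_self hA]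
  rfl

theorem transpose_mul_colSpaceProj_eq_zero {k : Type*} {B : Matrix n k K} (hBA : Bᵀ * A = 0) :
    Bᵀ * colSpaceProj A = 0 := by
  rw [colSpaceProj, ← Matrix.mul_assoc, ← Matrix.mul_assoc, hBA, Matrix.zero_mul, Matrix.zero_mul]

/-- With `Q = [A, B]` square, `[(AᵀA)⁻¹Aᵀ; (BᵀB)⁻¹Bᵀ]` is a left inverse of `Q`, hence a right
one, and `Q` times it is the sum of the two projections. -/
theorem colSpaceProj_add_colSpaceProj {k : Type*} [Fintype k] [DecidableEq k] [DecidableEq n]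
    {B : Matrix n k K} (e : n ≃ m ⊕ k) (hA : IsUnit (Aᵀ * A).det) (hB : IsUnit (Bᵀ * B).det)
    (hAB : Aᵀ * B = 0) : colSpaceProj A + colSpaceProj B = 1 := by
  have hBA : Bᵀ * A = 0 := by rw [← transpose_transpose A, ← transpose_mul, hAB, transpose_zero]
  have hleft : fromRows ((Aᵀ * A)⁻¹ * Aᵀ) ((Bᵀ * B)⁻¹ * Bᵀ) * fromCols A B = 1 := by
    simp only [fromRows_mul_fromCols, Matrix.mul_assoc, nonsing_inv_mul _ hA,
      nonsing_inv_mul _ hB, hAB, hBA, Matrix.mul_zero, fromBlocks_one]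
  rw [← (fromCols_mul_fromRows_eq_one_comm e _ _ _ _).mpr hleft, fromCols_mul_fromRows,
    colSpaceProj, colSpaceProj, Matrix.mul_assoc, Matrix.mul_assoc]

end Matrix

section LagPolynomial

variable {R V : Type*} [Ring R] [AddCommGroup V]

/-- `varCoeff Γ q A P i` is the coefficient of `L^(i+1)` in
`A L + ∑_{j<q} Γ_j L^(j+1) (1 - P L)`. -/
def varCoeff (Γ : ℕ → R) (q : ℕ) (A P : R) : ℕ → R
  | 0 => A + if 0 < q then Γ 0 else 0
  | i + 1 => (if i + 1 < q then Γ (i + 1) else 0) - Γ i * P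

theorem sum_range_succ_varCoeff (Γ : ℕ → R) (q : ℕ) (A P : R) (φ : ℕ → R →+ V) :
    ∑ i ∈ Finset.range (q + 1), φ i (varCoeff Γ q A P i) =
      φ 0 A + ∑ j ∈ Finset.range q, (φ j (Γ j) - φ (j + 1) (Γ j * P)) := by
  have htrunc : ∑ i ∈ Finset.range (q + 1), φ i (if i < q then Γ i else 0) =
      ∑ j ∈ Finset.range q, φ j (Γ j) := by
    rw [Finset.sum_range_succ, if_neg (lt_irrefl q), map_zero, add_zero]
    exact Finset.sum_congr rfl fun j hj => by rw [if_pos (Finset.mem_range.mp hj)]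
  rw [Finset.sum_range_succ'] at htrunc ⊢
  simp only [varCoeff, map_add, map_sub, Finset.sum_sub_distrib]
  rw [← htrunc]
  abel

end LagPolynomial

section DiffAlong

variable {K n : Type*} [CommRing K] [Fintype n] [DecidableEq n] {P Q : Matrix n n K}

def diffAlong (Q : Matrix n n K) (y : ℤ → n → K) (t : ℤ) : n → K := y t - Q *ᵥ y (t - 1)

variable (hPQ : P + Q = 1) (hQ : IsIdempotentElem Q) (y : ℤ → n → K)
include hPQ hQ

theorem mulVec_diffAlong (t : ℤ) : P *ᵥ diffAlong Q y t = P *ᵥ y t := by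
  rw [diffAlong, mulVec_sub, mulVec_mulVec, eq_sub_of_add_eq hPQ, hQ.one_sub_mul_self,
    zero_mulVec, sub_zero]

theorem diffAlong_sub_mulVec_diffAlong (t : ℤ) :
    diffAlong Q y t - P *ᵥ diffAlong Q y (t - 1) = y t - y (t - 1) := by
  rw [mulVec_diffAlong hPQ hQ, diffAlong, sub_sub, ← add_mulVec, add_comm, hPQ, one_mulVec]

theorem eq_sum_diffAlong {t : ℤ} (ht : 0 ≤ t) :
    y t = Q *ᵥ ∑ j ∈ Finset.Icc 1 t, diffAlong Q y j + P *ᵥ diffAlong Q y t + Q *ᵥ y 0 := by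
  have hQsum : Q *ᵥ ∑ j ∈ Finset.Icc 1 t, diffAlong Q y j = Q *ᵥ y t - Q *ᵥ y 0 := by
    induction t, ht using Int.leInduction with
    | base => simp
    | succ s hs ih =>
      rw [← Finset.insert_Icc_right_eq_Icc_add_one (by omega), Finset.sum_insert (by simp),
        mulVec_add, ih, diffAlong, mulVec_sub, mulVec_mulVec, hQ.eq, add_sub_cancel_right]
      abel
  have hsplit : y t = P *ᵥ y t + Q *ᵥ y t := by rw [← add_mulVec, hPQ, one_mulVec]
  rw [hQsum, mulVec_diffAlong hPQ hQ]
  nth_rewrite 1 [hsplit]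
  abel

theorem diffAlong_eq_sum_varCoeff (Pi : Matrix n n K) (hPi : Pi * Q = 0) (Γ : ℕ → Matrix n n K)
    (q : ℕ) (u : n → K) (t : ℤ)
    (hVECM : y t - y (t - 1) = Pi *ᵥ y (t - 1) +
      ∑ j ∈ Finset.range q, Γ j *ᵥ (y (t - 1 - j) - y (t - 1 - j - 1)) + u) :
    diffAlong Q y t = ∑ i ∈ Finset.range (q + 1),
      varCoeff Γ q (P + Pi) P i *ᵥ diffAlong Q y (t - 1 - i) + u := by
  have hlag := sum_range_succ_varCoeff Γ q (P + Pi) P fun i =>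
    AddMonoidHom.mk' (fun C => C *ᵥ diffAlong Q y (t - 1 - i)) fun A B => add_mulVec A B _
  simp only [AddMonoidHom.mk'_apply] at hlag
  have hΓ : ∀ j : ℕ,
      Γ j *ᵥ diffAlong Q y (t - 1 - j) - (Γ j * P) *ᵥ diffAlong Q y (t - 1 - ↑(j + 1)) =
        Γ j *ᵥ (y (t - 1 - j) - y (t - 1 - j - 1)) := by
    intro j
    rw [← mulVec_mulVec, ← mulVec_sub, Nat.cast_succ, ← sub_sub,
      diffAlong_sub_mulVec_diffAlong hPQ hQ]
  have hPiz : Pi *ᵥ diffAlong Q y (t - 1) = Pi *ᵥ y (t - 1) := by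
    rw [diffAlong, mulVec_sub, mulVec_mulVec, hPi, zero_mulVec, sub_zero]
  rw [hlag, Finset.sum_congr rfl fun j _ => hΓ j, Nat.cast_zero, sub_zero, add_mulVec, hPiz,
    mulVec_diffAlong hPQ hQ, add_assoc, add_assoc, ← add_assoc (Pi *ᵥ _), ← hVECM, diffAlong,
    eq_sub_of_add_eq hPQ, sub_mulVec, one_mulVec]
  abel

end DiffAlong

section Complexification

variable {m n p : Type*}

theorem toC_add (A B : Matrix m n ℝ) : toC (A + B) = toC A + toC B :=
  Matrix.map_add _ Complex.ofReal_add A B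

theorem toC_sub (A B : Matrix m n ℝ) : toC (A - B) = toC A - toC B :=
  Matrix.map_sub _ Complex.ofReal_sub A B

theorem toC_mul [Fintype n] (A : Matrix m n ℝ) (B : Matrix n p ℝ) :
    toC (A * B) = toC A * toC B :=
  Matrix.map_mul (f := Complex.ofRealHom)

theorem toC_fromRows {m' : Type*} (A : Matrix m n ℝ) (B : Matrix m' n ℝ) :
    toC (fromRows A B) = fromRows (toC A) (toC B) :=
  fromRows_map A B _

theorem toC_one [DecidableEq n] : toC (1 : Matrix n n ℝ) = 1 :=
  Matrix.map_one _ Complex.ofReal_zero Complex.ofReal_one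

end Complexification

namespace TVData

variable (M : TVData)

theorem Pbetaperp_eq_mul_transpose_βperpbar : M.Pbetaperp = M.βperp * (M.βperpbar)ᵀ := by
  rw [βperpbar, transpose_mul, transpose_nonsing_inv, transpose_mul, transpose_transpose,
    ← Matrix.mul_assoc, Pbetaperp]

theorem Pi'_mul_Pbetaperp (horth : (M.β)ᵀ * M.βperp = 0) (s : ℝ) :
    M.Pi' s * M.Pbetaperp = 0 := by
  rw [Pi', Matrix.mul_assoc, Pbetaperp, ← colSpaceProj, transpose_mul_colSpaceProj_eq_zero horth,
    Matrix.mul_zero]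

theorem zproc_eq_diffAlong (hPQ : M.Pbeta + M.Pbetaperp = 1) (T : ℕ) (t : ℤ) (w : M.Ω) :
    zproc M T t w = diffAlong M.Pbetaperp (M.y T · w) t := by
  change M.Pbeta *ᵥ M.y T t w + M.Pbetaperp *ᵥ (M.y T t w - M.y T (t - 1) w) = _
  rw [diffAlong, mulVec_sub, add_sub, ← add_mulVec, hPQ, one_mulVec]

theorem Bz_eq (hPQ : M.Pbeta + M.Pbetaperp = 1) (s : ℝ) (z : ℂ) :
    M.Bz s z = M.Γz s z - z • (M.Γz s z * toC M.Pbeta) - z • toC (M.Pi' s) := by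
  have hPperp : toC M.Pbetaperp = 1 - toC M.Pbeta := by
    rw [← toC_one, ← toC_sub, ← hPQ, add_sub_cancel_left]
  rw [Bz, Jmat, transpose_fromCols, toC_fromRows, fromCols_mul_fromRows, Matrix.sub_mul,
    Matrix.smul_mul, Matrix.smul_mul, Matrix.mul_assoc, Matrix.mul_assoc, ← toC_mul, ← toC_mul,
    ← toC_mul, ← Pbetaperp_eq_mul_transpose_βperpbar, hPperp]
  change (1 - z) • (M.Γz s z * toC M.Pbeta) - z • toC (M.Pi' s) + _ = _
  rw [sub_smul, one_smul, Matrix.mul_sub, Matrix.mul_one]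
  abel

/-- `M.varB s i` is `B_{i+1}(τ)`: the lag coefficients are indexed from `0`. -/
def varB (s : ℝ) : ℕ → Matrix (Fin M.d) (Fin M.d) ℝ :=
  varCoeff (M.Γ · s) (M.p0 - 1) (M.Pbeta + M.Pi' s) M.Pbeta

theorem Bz_eq_one_sub_sum (hPQ : M.Pbeta + M.Pbetaperp = 1) (s : ℝ) (z : ℂ) :
    M.Bz s z = 1 - ∑ i ∈ Finset.range (M.p0 - 1 + 1), z ^ (i + 1) • toC (M.varB s i) := by
  have hlag := sum_range_succ_varCoeff (M.Γ · s) (M.p0 - 1) (M.Pbeta + M.Pi' s) M.Pbeta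
    fun i => AddMonoidHom.mk' (fun C => z ^ (i + 1) • toC C) fun A B => by
      rw [toC_add, smul_add]
  simp only [AddMonoidHom.mk'_apply] at hlag
  rw [varB, hlag, M.Bz_eq hPQ, Γz, toC_add, Finset.sum_sub_distrib, sub_mul, Matrix.one_mul,
    Finset.sum_mul, smul_sub, Finset.smul_sum]
  simp only [toC_mul, smul_mul_assoc, smul_smul, ← pow_succ', smul_add, zero_add, pow_one]
  abel

end TVData

namespace Assumption1

variable {M : TVData} (hA1 : Assumption1 M)
include hA1

theorem isUnit_det_β : IsUnit ((M.β)ᵀ * M.β).det :=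
  isUnit_det_transpose_mul_self (by rw [hA1.rankβ, Fintype.card_fin])

theorem isUnit_det_βperp : IsUnit ((M.βperp)ᵀ * M.βperp).det :=
  isUnit_det_transpose_mul_self (by rw [hA1.perpβ.2, Fintype.card_fin])

theorem Pbeta_add_Pbetaperp : M.Pbeta + M.Pbetaperp = 1 :=
  colSpaceProj_add_colSpaceProj ((finCongr (by have := M.hr0d; omega)).trans finSumFinEquiv.symm)
    hA1.isUnit_det_β hA1.isUnit_det_βperp hA1.perpβ.1

theorem isIdempotentElem_Pbetaperp : IsIdempotentElem M.Pbetaperp :=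
  isIdempotentElem_colSpaceProj hA1.isUnit_det_βperp

end Assumption1

theorem statement1 (M : TVData) (hA1 : Assumption1 M) :
    ∃ (p : ℕ) (B : ℕ → ℝ → Matrix (Fin M.d) (Fin M.d) ℝ),
      -- B_i are the autoregressive coefficients of B_τ(L) = I - ∑_{i=1}^p B_i(τ)L^i
      (∀ s ∈ Icc (0:ℝ) 1, ∀ z : ℂ,
        M.Bz s z = 1 - ∑ i ∈ Finset.range p, z ^ (i + 1) • toC (B i s)) ∧
      -- z_t satisfies the time-varying VAR(p) recursion z_t = ∑ B_i(τ_t) z_{t-i} + u_t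
      (∀ T : ℕ, 1 ≤ T → ∀ t : ℤ, 1 ≤ t → t ≤ (T : ℤ) → ∀ w : M.Ω,
        zproc M T t w =
          (∑ i ∈ Finset.range p, (B i (τt T t)).mulVec (zproc M T (t - 1 - (i : ℤ)) w)) +
            M.u T t w) ∧
      -- exact representation y_t = P_{β⊥} ∑_{j=1}^t z_j + P_β z_t + P_{β⊥} y_0
      (∀ T : ℕ, 1 ≤ T → ∀ t : ℤ, 1 ≤ t → t ≤ (T : ℤ) → ∀ w : M.Ω,
        M.y T t w =
          M.Pbetaperp.mulVec (∑ j ∈ Finset.Icc (1:ℤ) t, zproc M T j w) +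
          M.Pbeta.mulVec (zproc M T t w) +
          M.Pbetaperp.mulVec (M.y T 0 w)) := by
  have hPQ := hA1.Pbeta_add_Pbetaperp
  have hQ := hA1.isIdempotentElem_Pbetaperp
  refine ⟨M.p0 - 1 + 1, fun i s => M.varB s i, fun s _ z => M.Bz_eq_one_sub_sum hPQ s z, ?_, ?_⟩
  · intro T hT t _ htT w
    simp only [M.zproc_eq_diffAlong hPQ]
    exact diffAlong_eq_sum_varCoeff hPQ hQ _ _ (M.Pi'_mul_Pbetaperp hA1.perpβ.1 _) _ _ _ _
      (hA1.model T hT t htT w)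
  · intro T _ t ht _ w
    simp only [M.zproc_eq_diffAlong hPQ]
    exact eq_sum_diffAlong hPQ hQ (M.y T · w) (by omega)
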